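/- arXiv:1305.2497 — 2 statements merged into one kernel-verified Lean document; each statement's English description precedes it below -/
import Mathlib

section
/- Let Φ : (0, ∞) → (0, ∞) be locally absolutely continuous with a.e. derivative satisfying tΦ'(t)/Φ(t) → 0 as t → 0⁺, and let σ > 0. Then there exists a constant c > 0, depending only on σ and Φ, such that for every finite strictly increasing sequence k₀ < k₁ < ⋯ < k_l of nonnegative integers one has ∑_{j=0}^{l} 2^{σ k_j} Φ(2^{−k_j}) ≤ c · 2^{σ k_l} Φ(2^{−k_l}). -/
/-!
Near `0`, `|t Φ'(t)| ≤ η Φ(t)` with `η` small forces the doubling bound `Φ(2t) ≤ ρ Φ(t)` for any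
prescribed `ρ > 1`: if `Φ` attains its maximum `M` on `[t, 2t]` at `x₀`, then
`Φ(x₀) - Φ(t) = ∫ Φ' ≤ η M log 2`. Taking `ρ = 2^(σ/2)`, the sequence `g n = ρⁿ Φ(2⁻ⁿ)` is
eventually nondecreasing, hence `g n ≤ D g m` for all `n ≤ m`. Since `2^(σ k) Φ(2^(-k)) = ρᵏ g k`,
the sum is dominated by `D g(k_l) ∑_j ρ^(k_j)`, a geometric sum bounded by `ρ/(ρ-1) · ρ^(k_l)`.
-/

open MeasureTheory Filter Finset Real Set

lemma continuousOn_Icc_of_sub_eq_integral {Φ DΦ : ℝ → ℝ} {a b : ℝ} (hab : a ≤ b)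
    (hInt : IntervalIntegrable DΦ volume a b)
    (hAC : ∀ x ∈ Icc a b, Φ x - Φ a = ∫ y in a..x, DΦ y) :
    ContinuousOn Φ (Icc a b) := by
  have hprim : ContinuousOn (fun x => Φ a + ∫ y in a..x, DΦ y) (uIcc a b) :=
    continuousOn_const.add (intervalIntegral.continuousOn_primitive_interval' hInt left_mem_uIcc)
  rw [uIcc_of_le hab] at hprim
  exact hprim.congr fun x hx => by linarith [hAC x hx]

lemma sub_le_mul_log_of_mul_deriv_le {Φ DΦ : ℝ → ℝ} {η M s t : ℝ} (hs : 0 < s) (hst : s ≤ t)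
    (hInt : IntervalIntegrable DΦ volume s t) (hAC : Φ t - Φ s = ∫ x in s..t, DΦ x)
    (hη : 0 ≤ η) (hM : ∀ x ∈ Icc s t, Φ x ≤ M)
    (hbd : ∀ᵐ x ∂volume.restrict (Icc s t), x * DΦ x ≤ η * Φ x) :
    Φ t - Φ s ≤ η * M * log (t / s) := by
  have hpt : ∀ᵐ x ∂volume.restrict (Icc s t), DΦ x ≤ η * M * x⁻¹ := by
    filter_upwards [hbd, ae_restrict_mem measurableSet_Icc] with x hx hxI
    rw [← div_eq_mul_inv, le_div_iff₀ (hs.trans_le hxI.1), mul_comm]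
    exact hx.trans (mul_le_mul_of_nonneg_left (hM x hxI) hη)
  have hinv : IntervalIntegrable (fun x => η * M * x⁻¹) volume s t :=
    (intervalIntegrable_inv_iff.2 (.inr (notMem_uIcc_of_lt hs (hs.trans_le hst)))).const_mul _
  rw [hAC, ← integral_inv_of_pos hs (hs.trans_le hst), ← intervalIntegral.integral_const_mul]
  exact intervalIntegral.integral_mono_ae_restrict hst hInt hinv hpt

lemma one_sub_mul_log_two_mul_le {Φ DΦ : ℝ → ℝ} {η t₀ t : ℝ}
    (hpos : ∀ t : ℝ, 0 < t → 0 < Φ t)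
    (hInt : ∀ s t : ℝ, 0 < s → s ≤ t → IntervalIntegrable DΦ volume s t)
    (hAC : ∀ s t : ℝ, 0 < s → s ≤ t → Φ t - Φ s = ∫ x in s..t, DΦ x)
    (hη : 0 ≤ η) (hbd : ∀ᵐ x ∂volume.restrict (Ioo 0 t₀), |x * DΦ x| ≤ η * Φ x)
    (ht : 0 < t) (h2t : 2 * t < t₀) :
    (1 - η * log 2) * Φ (2 * t) ≤ Φ t := by
  have ht2 : t ≤ 2 * t := by linarith
  have hcont : ContinuousOn Φ (Icc t (2 * t)) :=
    continuousOn_Icc_of_sub_eq_integral ht2 (hInt t _ ht ht2) fun x hx => hAC t x ht hx.1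
  obtain ⟨x₀, ⟨htx₀, hx₀⟩, hmax⟩ := isCompact_Icc.exists_isMaxOn (nonempty_Icc.2 ht2) hcont
  have hbd' : ∀ᵐ x ∂volume.restrict (Icc t x₀), x * DΦ x ≤ η * Φ x := by
    refine (ae_restrict_of_ae_restrict_of_subset ?_ hbd).mono fun x hx => (le_abs_self _).trans hx
    exact fun x hx => ⟨ht.trans_le hx.1, hx.2.trans_lt (hx₀.trans_lt h2t)⟩
  have hrise : Φ x₀ - Φ t ≤ η * Φ x₀ * log 2 := by
    refine (sub_le_mul_log_of_mul_deriv_le ht htx₀ (hInt t x₀ ht htx₀) (hAC t x₀ ht htx₀) hη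
      (fun x hx => hmax ⟨hx.1, hx.2.trans hx₀⟩) hbd').trans ?_
    have hx₀t : x₀ / t ≤ 2 := by rw [div_le_iff₀ ht]; linarith
    have hΦx₀ := hpos x₀ (ht.trans_le htx₀)
    gcongr
    exact div_pos (ht.trans_le htx₀) ht
  have hΦ2t : Φ (2 * t) ≤ Φ x₀ := hmax ⟨ht2, le_rfl⟩
  rcases le_or_gt 0 (1 - η * log 2) with h | h
  · nlinarith [mul_le_mul_of_nonneg_left hΦ2t h]
  · nlinarith [hpos t ht, hpos (2 * t) (by linarith)]

lemma eventually_le_mul_dyadic {Φ DΦ : ℝ → ℝ}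
    (hpos : ∀ t : ℝ, 0 < t → 0 < Φ t)
    (hInt : ∀ s t : ℝ, 0 < s → s ≤ t → IntervalIntegrable DΦ volume s t)
    (hAC : ∀ s t : ℝ, 0 < s → s ≤ t → Φ t - Φ s = ∫ x in s..t, DΦ x)
    (hlim : ∀ η : ℝ, 0 < η → ∃ t₀ : ℝ, 0 < t₀ ∧
      ∀ᵐ t ∂(volume.restrict (Ioo (0 : ℝ) t₀)), |t * DΦ t| ≤ η * Φ t)
    {ρ : ℝ} (hρ : 1 < ρ) :
    ∀ᶠ n : ℕ in atTop, Φ (2 ^ n)⁻¹ ≤ ρ * Φ (2 ^ (n + 1))⁻¹ := by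
  have hlog2 : 0 < log 2 := log_pos one_lt_two
  set η := (1 - ρ⁻¹) / log 2 with hη_def
  have hη : 0 < η := div_pos (sub_pos.2 (inv_lt_one_of_one_lt₀ hρ)) hlog2
  have hηlog : 1 - η * log 2 = ρ⁻¹ := by rw [hη_def, div_mul_cancel₀ _ hlog2.ne']; ring
  obtain ⟨t₀, ht₀, hbd⟩ := hlim η hη
  have hsmall : ∀ᶠ n : ℕ in atTop, ((2 : ℝ) ^ n)⁻¹ < t₀ :=
    (tendsto_inv_atTop_zero.comp (tendsto_pow_atTop_atTop_of_one_lt one_lt_two)).eventually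
      (gt_mem_nhds ht₀)
  filter_upwards [hsmall] with n hn
  have hhalf : 2 * ((2 : ℝ) ^ (n + 1))⁻¹ = (2 ^ n)⁻¹ := by rw [pow_succ]; field_simp
  have h := one_sub_mul_log_two_mul_le hpos hInt hAC hη.le hbd (by positivity) (hhalf ▸ hn)
  rwa [hhalf, hηlog, inv_mul_le_iff₀ (zero_lt_one.trans hρ)] at h

lemma exists_le_mul_of_eventually_le_succ {g : ℕ → ℝ} (hg : ∀ n, 0 < g n)
    (hmono : ∀ᶠ n in atTop, g n ≤ g (n + 1)) :
    ∃ D, 0 < D ∧ ∀ n m, n ≤ m → g n ≤ D * g m := by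
  obtain ⟨K, hK⟩ := eventually_atTop.1 hmono
  have hmonoK := monotoneOn_nat_Ici_of_le_succ hK
  have hne : (range (K + 1)).Nonempty := nonempty_range_add_one
  set B := (range (K + 1)).sup' hne g
  set a := (range (K + 1)).inf' hne g
  have hB : ∀ n ≤ K, g n ≤ B := fun n hn => le_sup' g (mem_range_succ_iff.2 hn)
  have ha_le : ∀ n ≤ K, a ≤ g n := fun n hn => inf'_le g (mem_range_succ_iff.2 hn)
  have ha : 0 < a := (lt_inf'_iff hne).2 fun i _ => hg i
  have ha' : ∀ m, a ≤ g m := fun m => by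
    rcases le_total m K with h | h
    · exact ha_le m h
    · exact (ha_le K le_rfl).trans (hmonoK (le_refl K) h h)
  have haB : a ≤ B := (ha' 0).trans (hB 0 K.zero_le)
  have hD : 1 ≤ B / a := (one_le_div ha).2 haB
  refine ⟨B / a, zero_lt_one.trans_le hD, fun n m hnm => ?_⟩
  rcases le_total n K with h | h
  · calc g n ≤ B := hB n h
      _ = B / a * a := (div_mul_cancel₀ _ ha.ne').symm
      _ ≤ B / a * g m := by gcongr; exact ha' m
  · calc g n ≤ g m := hmonoK h (h.trans hnm) hnm
      _ ≤ B / a * g m := le_mul_of_one_le_left (hg m).le hD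

lemma sum_pow_le_of_forall_le {μ : ℝ} (hμ : 1 < μ) {s : Finset ℕ} {N : ℕ}
    (hs : ∀ i ∈ s, i ≤ N) :
    ∑ i ∈ s, μ ^ i ≤ μ / (μ - 1) * μ ^ N := by
  have hsub : s ⊆ range (N + 1) := fun i hi => mem_range_succ_iff.2 (hs i hi)
  have hμ1 : 0 < μ - 1 := sub_pos.2 hμ
  calc ∑ i ∈ s, μ ^ i ≤ ∑ i ∈ range (N + 1), μ ^ i :=
        sum_le_sum_of_subset_of_nonneg hsub fun i _ _ => by positivity
    _ = (μ ^ (N + 1) - 1) / (μ - 1) := geom_sum_eq hμ.ne' _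
    _ ≤ μ / (μ - 1) * μ ^ N := by
        rw [div_mul_eq_mul_div, pow_succ']
        gcongr
        linarith

lemma sum_pow_mul_le_of_le_mul {g : ℕ → ℝ} {μ D : ℝ} (hμ : 1 < μ) (hg : ∀ n, 0 ≤ g n)
    (hle : ∀ n m, n ≤ m → g n ≤ D * g m) {l : ℕ} {k : Fin (l + 1) → ℕ} (hk : StrictMono k) :
    ∑ j, μ ^ k j * g (k j) ≤ D * (μ / (μ - 1)) * (μ ^ k (Fin.last l) * g (k (Fin.last l))) := by
  set N := k (Fin.last l)
  have hkN : ∀ j, k j ≤ N := fun j => hk.monotone (Fin.le_last j)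
  have hDg : 0 ≤ D * g N := (hg N).trans (hle N N le_rfl)
  calc ∑ j, μ ^ k j * g (k j) ≤ ∑ j, μ ^ k j * (D * g N) :=
        sum_le_sum fun j _ => mul_le_mul_of_nonneg_left (hle _ _ (hkN j)) (by positivity)
    _ = D * g N * ∑ i ∈ univ.image k, μ ^ i := by
        rw [sum_image hk.injective.injOn, mul_sum]
        simp only [mul_comm]
    _ ≤ D * g N * (μ / (μ - 1) * μ ^ N) := by
        gcongr
        exact sum_pow_le_of_forall_le hμ (by simpa using hkN)
    _ = D * (μ / (μ - 1)) * (μ ^ N * g N) := by ring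

lemma two_rpow_mul_natCast {σ : ℝ} (n : ℕ) :
    (2 : ℝ) ^ (σ * n) = (2 ^ (σ / 2)) ^ n * (2 ^ (σ / 2)) ^ n := by
  rw [← mul_pow, ← rpow_add two_pos, add_halves, ← rpow_natCast, ← rpow_mul zero_le_two]

/-- For `Φ : (0,∞) → (0,∞)` locally absolutely continuous with
`t·Φ'(t)/Φ(t) → 0` as `t → 0⁺` and `σ > 0`, the sum `∑_j 2^(σ k_j) Φ(2^(−k_j))` over a
strictly increasing finite sequence of nonnegative integers is bounded by a constant
(depending only on `σ`, `Φ`) times the last term. -/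
theorem statement4 (Φ DΦ : ℝ → ℝ)
    (hpos : ∀ t : ℝ, 0 < t → 0 < Φ t)
    (hInt : ∀ s t : ℝ, 0 < s → s ≤ t → IntervalIntegrable DΦ volume s t)
    (hAC : ∀ s t : ℝ, 0 < s → s ≤ t → Φ t - Φ s = ∫ x in s..t, DΦ x)
    (hlim : ∀ η : ℝ, 0 < η → ∃ t₀ : ℝ, 0 < t₀ ∧
      ∀ᵐ t ∂(volume.restrict (Set.Ioo (0 : ℝ) t₀)), |t * DΦ t| ≤ η * Φ t)
    (σ : ℝ) (hσ : 0 < σ) :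
    ∃ c : ℝ, 0 < c ∧ ∀ (l : ℕ) (k : Fin (l + 1) → ℕ), StrictMono k →
      ∑ j : Fin (l + 1), (2 : ℝ) ^ (σ * (k j : ℝ)) * Φ ((2 : ℝ) ^ (-(k j : ℝ)))
        ≤ c * ((2 : ℝ) ^ (σ * (k (Fin.last l) : ℝ)) * Φ ((2 : ℝ) ^ (-(k (Fin.last l) : ℝ)))) := by
  set ρ : ℝ := 2 ^ (σ / 2)
  have hρ : 1 < ρ := one_lt_rpow one_lt_two (half_pos hσ)
  set g : ℕ → ℝ := fun n => ρ ^ n * Φ (2 ^ n)⁻¹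
  have hg : ∀ n, 0 < g n := fun n => mul_pos (by positivity) (hpos _ (by positivity))
  have hmono : ∀ᶠ n in atTop, g n ≤ g (n + 1) := by
    filter_upwards [eventually_le_mul_dyadic hpos hInt hAC hlim hρ] with n hn
    calc g n ≤ ρ ^ n * (ρ * Φ (2 ^ (n + 1))⁻¹) := mul_le_mul_of_nonneg_left hn (by positivity)
      _ = g (n + 1) := by simp only [g]; ring
  obtain ⟨D, hD, hle⟩ := exists_le_mul_of_eventually_le_succ hg hmono
  have hterm : ∀ n : ℕ, (2 : ℝ) ^ (σ * n) * Φ (2 ^ (-(n : ℝ))) = ρ ^ n * g n := fun n => by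
    rw [two_rpow_mul_natCast, rpow_neg zero_le_two, rpow_natCast, mul_assoc]
  refine ⟨D * (ρ / (ρ - 1)), by have := sub_pos.2 hρ; positivity, fun l k hk => ?_⟩
  simp only [hterm]
  exact sum_pow_mul_le_of_le_mul hρ (fun n => (hg n).le) hle hk
end

section
/- Fix 1 < p < ∞, C* ≥ 1 and Ĉ ≥ 1. Then there exists σ₂ > 0, depending only on p and C*, with the following property. Let (V, ≤) be a finite rooted tree of maximal depth N with ψ : ℕ → [0, ∞) increasing, ψ(0) = 0, satisfying: card V_{j−j₀}(ξ) ≤ C* 2^{ψ(j)−ψ(j₀)} for all j₀ ≤ j and ξ of depth j₀; every vertex has at most Ĉ immediate successors; the weights are level-constant, u(ξ) = u_{|ξ|} > 0, w(ξ) = w_{|ξ|} > 0, with Ĉ⁻¹ ≤ u_j/u_{j+1} ≤ Ĉ and Ĉ⁻¹ ≤ w_j/w_{j+1} ≤ Ĉ for all j; and for some σ ∈ (0, σ₂): u_j 2^{−ψ(j)/p} ≥ σ^{−1/p'} u_{j−1} 2^{−ψ(j−1)/p} and w_j 2^{ψ(j)/p} ≤ σ^{1/p} w_{j−1} 2^{ψ(j−1)/p}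 for all j ≥ 1 (p' = p/(p−1)). Define ψ* : ℕ → ℝ by ψ*(0) = 0 and 2^{ψ*(j)−ψ*(j−1)} = ⌊2^{ψ(j)−ψ*(j−1)}⌋. Let ξ* ∈ V have depth j₀, and let (Â, ξ̂) be a finite rooted tree of depth N − j₀ whose every non-maximal vertex of depth k has exactly 2^{ψ*(j₀+k+1)−ψ*(j₀+k)} immediate successors, with weights û(η) = u_{j₀+k}, ŵ(η) = w_{j₀+k} for η of depth k. Then 𝔖_{A_{ξ*},u,w} ≤ c · 𝔖_{Â,û,ŵ} for a constant c depending only on p, Ĉ and C*. -/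
open scoped Classical

noncomputable section

/-- A finite partial order is a rooted tree if it has a least element (the root) and
for every `ξ` the set of predecessors `{η | η ≤ ξ}` is linearly ordered. -/
def IsRootedTree (V : Type) [Fintype V] [PartialOrder V] : Prop :=
  (∃ ξ₀ : V, ∀ ξ : V, ξ₀ ≤ ξ) ∧
  ∀ ξ η₁ η₂ : V, η₁ ≤ ξ → η₂ ≤ ξ → η₁ ≤ η₂ ∨ η₂ ≤ η₁

/-- The depth of a vertex: the number of its strict predecessors. -/
def treeDepth {V : Type} [PartialOrder V] (ξ : V) : ℕ :=
  Nat.card {η : V // η < ξ}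

/-- The least constant `C ≥ 0` in the discrete two-weight Hardy-type inequality
`(∑_{ξ ≥ ξs} w(ξ)^q (∑_{ξs ≤ ξ' ≤ ξ} u(ξ') f(ξ'))^q)^{1/q} ≤ C (∑_{ξ ≥ ξs} f(ξ)^p)^{1/p}`
over all nonnegative `f`. -/
def SconstPQ {V : Type} [Fintype V] [PartialOrder V]
    (p q : ℝ) (u w : V → ℝ) (ξs : V) : ℝ :=
  sInf {C : ℝ | 0 ≤ C ∧ ∀ f : V → ℝ, (∀ ξ : V, 0 ≤ f ξ) →
    (∑ ξ ∈ Finset.univ.filter (fun ξ : V => ξs ≤ ξ),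
        w ξ ^ q * (∑ ξ' ∈ Finset.univ.filter (fun ξ' : V => ξs ≤ ξ' ∧ ξ' ≤ ξ),
          u ξ' * f ξ') ^ q) ^ (1 / q)
      ≤ C * (∑ ξ ∈ Finset.univ.filter (fun ξ : V => ξs ≤ ξ), f ξ ^ p) ^ (1 / p)}

/-- The family `J'_{ξs}`: subsets `D` of `{η | η ≥ ξs}` containing `ξs`, closed under
taking intermediate vertices, and such that every non-maximal element of `D` has all
of its immediate successors (in `V`) in `D`. -/
def Jfam {V : Type} [Fintype V] [PartialOrder V] (ξs : V) (D : Finset V) : Prop :=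
  ξs ∈ D ∧ (∀ ξ ∈ D, ξs ≤ ξ) ∧
  (∀ η ζ : V, ζ ∈ D → ξs ≤ η → η ≤ ζ → η ∈ D) ∧
  (∀ ξ ∈ D, (∃ ζ ∈ D, ξ < ζ) → ∀ η : V, ξ ⋖ η → η ∈ D)

/-- The quantity `β_D`: the infimum of `(∑_ξ |f(ξ)|^p)^{1/p}` over functions `f` with
`∑_{ξs ≤ ξ' ≤ ξ} f(ξ') u(ξ') = 1` for every maximal element `ξ` of `D`. -/
def betaD {V : Type} [Fintype V] [PartialOrder V]
    (p : ℝ) (u : V → ℝ) (ξs : V) (D : Finset V) : ℝ :=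
  sInf {b : ℝ | ∃ f : V → ℝ,
    (∀ ξ ∈ D, (∀ ζ ∈ D, ¬ ξ < ζ) →
      ∑ ξ' ∈ Finset.univ.filter (fun ξ' : V => ξs ≤ ξ' ∧ ξ' ≤ ξ), f ξ' * u ξ' = 1) ∧
    b = (∑ ξ : V, |f ξ| ^ p) ^ (1 / p)}

/-- The modified level function `ψ*`: `ψ*(0) = 0` and
`2^{ψ*(j) − ψ*(j−1)} = ⌊2^{ψ(j) − ψ*(j−1)}⌋`. -/
def psiStar (ψ : ℕ → ℝ) : ℕ → ℝ
  | 0 => 0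
  | j + 1 => psiStar ψ j + Real.logb 2 ((⌊(2 : ℝ) ^ (ψ (j + 1) - psiStar ψ j)⌋ : ℤ) : ℝ)


/-!
Both Hardy constants are compared with the discrete Muckenhoupt quantity
`sup_m (∑_{j₀ ≤ l ≤ m} u_l^{p'} n_l^{1-p'})^{p-1} ∑_{m ≤ k ≤ N} n_k w_k^p`, where
`n_j = 2^{ψ*(j) - ψ*(j₀)}` is the number of vertices of `Â` at depth `j - j₀`.

On `Â`, testing the Hardy inequality with the one-dimensional extremal function
`u^{p'-1} n^{1-p'}`, cut off above level `m`, bounds the Muckenhoupt quantity by `𝔖_Â^p`.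

On `A_{ξ*}`, Hölder's inequality along each chain, with weights `n_j U_j^{1/p'}` where `U` are the
partial sums above, followed by an exchange of summation, leaves sums over subtrees. Since
`2^{ψ(j) - ψ(i)} ≤ 2 · 2^{ψ*(j) - ψ*(i)}`, the growth hypothesis makes a subtree rooted at depth `i`
have at most `2 C* n_j / n_i` vertices at depth `j`, so these become level sums. The Hölder step
and the subtree sums are both closed by the telescoping estimate `∑ a_i (a_1 + ⋯ + a_i)^{r-1} ≤ r⁻¹ (∑ a_i)^r` for `0 < r < 1`.
The result is `𝔖_{A_{ξ*}}^p ≤ 2 C* p p'^{p-1} 𝔖_Â^p`.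
-/

open Finset

section Telescoping

variable {r : ℝ}

theorem sub_mul_rpow_sub_one_le (hr0 : 0 < r) (hr1 : r < 1) {a b : ℝ} (ha : 0 ≤ a)
    (hab : a ≤ b) : (b - a) * b ^ (r - 1) ≤ r⁻¹ * (b ^ r - a ^ r) := by
  rcases hab.eq_or_lt with rfl | hab
  · simp
  have hb : 0 < b := ha.trans_lt hab
  have hx0 : 0 ≤ a / b := div_nonneg ha hb.le
  -- concavity of `x ↦ x ^ r`, as weighted AM-GM at `x = a / b`
  have hamgm : (a / b) ^ r ≤ r * (a / b) + (1 - r) := by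
    simpa using Real.geom_mean_le_arith_mean2_weighted hr0.le (by linarith) hx0 zero_le_one
      (by ring)
  have e1 : (b - a) * b ^ (r - 1) = (1 - a / b) * b ^ r := by
    rw [Real.rpow_sub hb, Real.rpow_one]
    field_simp
  have e2 : a ^ r = (a / b) ^ r * b ^ r := by
    rw [← Real.mul_rpow hx0 hb.le, div_mul_cancel₀ _ hb.ne']
  rw [e1, e2, le_inv_mul_iff₀ hr0]
  nlinarith [Real.rpow_pos_of_pos hb r]

/-- Discrete analogue of `∫₀ᵗ A' A ^ (r - 1) = r⁻¹ A(t) ^ r`. -/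
theorem sum_mul_rpow_partialSum_le {α : Type*} [LinearOrder α] (hr0 : 0 < r) (hr1 : r < 1)
    (s : Finset α) (a : α → ℝ) (ha : ∀ i ∈ s, 0 ≤ a i) :
    ∑ i ∈ s, a i * (∑ l ∈ s with l ≤ i, a l) ^ (r - 1) ≤ r⁻¹ * (∑ i ∈ s, a i) ^ r := by
  classical
  induction s using Finset.induction_on_max with
  | empty => simp [Real.zero_rpow hr0.ne']
  | insert m s hlt ih =>
    have hm : m ∉ s := fun h => lt_irrefl m (hlt m h)
    have ha' : ∀ i ∈ s, 0 ≤ a i := fun i hi => ha i (mem_insert_of_mem hi)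
    have hfilter : ∀ i ∈ s, ({l ∈ insert m s | l ≤ i} : Finset α) = {l ∈ s | l ≤ i} := by
      intro i hi
      rw [filter_insert, if_neg (not_le.2 (hlt i hi))]
    have hfilter_m : ({l ∈ insert m s | l ≤ m} : Finset α) = insert m s :=
      filter_true_of_mem fun l hl => by
        rcases mem_insert.1 hl with rfl | hl
        · exact le_rfl
        · exact (hlt l hl).le
    have hS : 0 ≤ ∑ i ∈ s, a i := sum_nonneg ha'
    have hstep := sub_mul_rpow_sub_one_le hr0 hr1 hS
      (le_add_of_nonneg_right (ha m (mem_insert_self m s)))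
    have hs : ∑ i ∈ s, a i * (∑ l ∈ insert m s with l ≤ i, a l) ^ (r - 1)
        = ∑ i ∈ s, a i * (∑ l ∈ s with l ≤ i, a l) ^ (r - 1) :=
      sum_congr rfl fun i hi => by rw [hfilter i hi]
    rw [sum_insert hm, hfilter_m, hs, sum_insert hm]
    rw [add_sub_cancel_left, add_comm (∑ i ∈ s, a i)] at hstep
    linarith [ih ha']

theorem sum_Icc_mul_rpow_partialSum_le (hr0 : 0 < r) (hr1 : r < 1) (a : ℕ → ℝ)
    (ha : ∀ i, 0 ≤ a i) (j m : ℕ) :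
    ∑ i ∈ Icc j m, a i * (∑ l ∈ Icc j i, a l) ^ (r - 1)
      ≤ r⁻¹ * (∑ l ∈ Icc j m, a l) ^ r := by
  refine le_of_eq_of_le (sum_congr rfl fun i hi => ?_)
    (sum_mul_rpow_partialSum_le hr0 hr1 _ a fun i _ => ha i)
  have : ({l ∈ Icc j m | l ≤ i} : Finset ℕ) = Icc j i := by
    ext l
    simp only [mem_filter, mem_Icc] at hi ⊢
    omega
  rw [this]

theorem sum_Icc_mul_rpow_tailSum_le (hr0 : 0 < r) (hr1 : r < 1) (a : ℕ → ℝ)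
    (ha : ∀ i, 0 ≤ a i) (j m : ℕ) :
    ∑ i ∈ Icc j m, a i * (∑ l ∈ Icc i m, a l) ^ (r - 1)
      ≤ r⁻¹ * (∑ l ∈ Icc j m, a l) ^ r := by
  refine le_of_eq_of_le (sum_congr rfl fun i hi => ?_)
    (sum_mul_rpow_partialSum_le (α := ℕᵒᵈ) hr0 hr1 (Icc j m : Finset ℕ) a fun i _ => ha i)
  have : ({l ∈ Icc j m | OrderDual.toDual l ≤ OrderDual.toDual i} : Finset ℕ) = Icc i m := by
    ext l
    simp only [mem_filter, mem_Icc, OrderDual.toDual_le_toDual] at hi ⊢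
    omega
  -- the partial sums of the previous lemma in `ℕᵒᵈ` are tail sums in `ℕ`
  change _ = a i * (∑ l ∈ ({l ∈ Icc j m | OrderDual.toDual l ≤ OrderDual.toDual i} : Finset ℕ),
    a l) ^ (r - 1)
  rw [this]

end Telescoping

theorem Real.HolderConjugate.rpow_sum_mul_le {ι : Type*} {p q : ℝ} (hpq : p.HolderConjugate q)
    (s : Finset ι) {a b lam : ι → ℝ} (ha : ∀ i ∈ s, 0 ≤ a i) (hb : ∀ i ∈ s, 0 ≤ b i)
    (hlam : ∀ i ∈ s, 0 < lam i) :
    (∑ i ∈ s, a i * b i) ^ p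
      ≤ (∑ i ∈ s, a i ^ q * lam i ^ (1 - q)) ^ (p - 1) * ∑ i ∈ s, lam i * b i ^ p := by
  have hp0 := hpq.pos
  have hq0 := hpq.symm.pos
  have hx : ∀ i ∈ s, 0 ≤ a i * lam i ^ (-p⁻¹) := fun i hi =>
    mul_nonneg (ha i hi) (Real.rpow_nonneg (hlam i hi).le _)
  have hy : ∀ i ∈ s, 0 ≤ lam i ^ p⁻¹ * b i := fun i hi =>
    mul_nonneg (Real.rpow_nonneg (hlam i hi).le _) (hb i hi)
  have hxq : ∀ i ∈ s, (a i * lam i ^ (-p⁻¹)) ^ q = a i ^ q * lam i ^ (1 - q) := by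
    intro i hi
    rw [Real.mul_rpow (ha i hi) (Real.rpow_nonneg (hlam i hi).le _),
      ← Real.rpow_mul (hlam i hi).le]
    congr 2
    have := hpq.sub_one_mul_conj
    field_simp
    linarith
  have hyp : ∀ i ∈ s, (lam i ^ p⁻¹ * b i) ^ p = lam i * b i ^ p := by
    intro i hi
    rw [Real.mul_rpow (Real.rpow_nonneg (hlam i hi).le _) (hb i hi),
      Real.rpow_inv_rpow (hlam i hi).le hp0.ne']
  have hsplit : ∑ i ∈ s, a i * b i = ∑ i ∈ s, (a i * lam i ^ (-p⁻¹)) * (lam i ^ p⁻¹ * b i) :=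
    sum_congr rfl fun i hi => by
      rw [mul_mul_mul_comm, mul_comm (lam i ^ _) (b i), mul_mul_mul_comm,
        ← Real.rpow_add (hlam i hi), add_neg_cancel, Real.rpow_zero, mul_one]
  have hholder := Real.inner_le_Lp_mul_Lq_of_nonneg s hpq.symm hx hy
  rw [← hsplit, sum_congr rfl hxq, sum_congr rfl hyp] at hholder
  have hX : 0 ≤ ∑ i ∈ s, a i ^ q * lam i ^ (1 - q) := sum_nonneg fun i hi =>
    mul_nonneg (Real.rpow_nonneg (ha i hi) _) (Real.rpow_nonneg (hlam i hi).le _)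
  have hY : 0 ≤ ∑ i ∈ s, lam i * b i ^ p := sum_nonneg fun i hi =>
    mul_nonneg (hlam i hi).le (Real.rpow_nonneg (hb i hi) _)
  calc (∑ i ∈ s, a i * b i) ^ p
      ≤ ((∑ i ∈ s, a i ^ q * lam i ^ (1 - q)) ^ (1 / q)
          * (∑ i ∈ s, lam i * b i ^ p) ^ (1 / p)) ^ p :=
        Real.rpow_le_rpow (sum_nonneg fun i hi => mul_nonneg (ha i hi) (hb i hi)) hholder
          hp0.le
    _ = (∑ i ∈ s, a i ^ q * lam i ^ (1 - q)) ^ (p - 1) * ∑ i ∈ s, lam i * b i ^ p := by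
        rw [Real.mul_rpow (Real.rpow_nonneg hX _) (Real.rpow_nonneg hY _),
          ← Real.rpow_mul hX, ← Real.rpow_mul hY, one_div_mul_cancel hp0.ne', Real.rpow_one]
        congr 2
        have := hpq.sub_one_mul_conj
        field_simp
        linarith

theorem Real.HolderConjugate.mul_rpow_extremal_eq {p q : ℝ} (hpq : p.HolderConjugate q) {a b : ℝ}
    (ha : 0 < a) (hb : 0 < b) : b * (a ^ (q - 1) * b ^ (1 - q)) ^ p = a ^ q * b ^ (1 - q) := by
  have hqp : (q - 1) * p = q := hpq.symm.sub_one_mul_conj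
  rw [Real.mul_rpow (Real.rpow_nonneg ha.le _) (Real.rpow_nonneg hb.le _), ← Real.rpow_mul ha.le,
    ← Real.rpow_mul hb.le, hqp, mul_left_comm,
    ← Real.rpow_one_add' hb.le (by linarith [hpq.symm.lt])]
  congr 2
  linarith

theorem Real.HolderConjugate.rpow_inv_mul_rpow_inv_eq {p q : ℝ} (hpq : p.HolderConjugate q)
    {a b : ℝ} (ha : 0 ≤ a) (hb : 0 ≤ b) : a ^ q⁻¹ * b ^ p⁻¹ = (a ^ (p - 1) * b) ^ p⁻¹ := by
  rw [← hpq.one_sub_inv, show 1 - p⁻¹ = (p - 1) * p⁻¹ by field_simp [hpq.pos.ne'],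
    Real.rpow_mul ha, Real.mul_rpow (Real.rpow_nonneg ha _) hb]

theorem rpow_div_le_of_rpow_mul_le {p q a b G : ℝ} (hq : 0 < q) (ha : 0 ≤ a) (hb : 0 < b)
    (h : a ^ (p - 1) * b ≤ G) : a ^ ((p - 1) / q) ≤ G ^ q⁻¹ * b ^ (-q⁻¹) := by
  have hG : 0 ≤ G := (mul_nonneg (Real.rpow_nonneg ha _) hb.le).trans h
  calc a ^ ((p - 1) / q) = (a ^ (p - 1)) ^ q⁻¹ := by rw [← Real.rpow_mul ha, div_eq_mul_inv]
    _ ≤ (G * b⁻¹) ^ q⁻¹ := Real.rpow_le_rpow (Real.rpow_nonneg ha _)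
        (by rwa [← div_eq_mul_inv, le_div_iff₀ hb]) (inv_nonneg.2 hq.le)
    _ = G ^ q⁻¹ * b ^ (-q⁻¹) := by
        rw [Real.mul_rpow hG (inv_nonneg.2 hb.le), Real.inv_rpow hb.le, Real.rpow_neg hb.le]


section Tree

variable {V : Type} [Fintype V] [PartialOrder V]

theorem treeDepth_eq_card (ξ : V) : treeDepth ξ = #{η | η < ξ} := by
  rw [treeDepth, Nat.card_eq_fintype_card, Fintype.card_subtype]

theorem treeDepth_strictMono : StrictMono (treeDepth : V → ℕ) := by
  intro η ξ h
  simp only [treeDepth_eq_card]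
  refine card_lt_card ((ssubset_iff_of_subset fun ζ hζ => ?_).2 ⟨η, by simp [h], by simp⟩)
  simp only [mem_filter, mem_univ, true_and] at hζ ⊢
  exact hζ.trans h

theorem treeDepth_mono : Monotone (treeDepth : V → ℕ) := treeDepth_strictMono.monotone

theorem eq_of_treeDepth_eq_of_le {η ξ : V} (h : η ≤ ξ) (hd : treeDepth η = treeDepth ξ) :
    η = ξ :=
  h.eq_or_lt.resolve_right fun hlt => (treeDepth_strictMono hlt).ne hd

theorem treeDepth_eq_zero_of_forall_le {ξ₀ : V} (hroot : ∀ η, ξ₀ ≤ η) : treeDepth ξ₀ = 0 := by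
  simp only [treeDepth_eq_card, card_eq_zero, filter_eq_empty_iff, mem_univ, true_implies]
  exact fun η => (hroot η).not_gt

variable (hT : IsRootedTree V)
include hT

theorem IsRootedTree.eq_of_le_of_treeDepth_eq {ξ η₁ η₂ : V} (h₁ : η₁ ≤ ξ) (h₂ : η₂ ≤ ξ)
    (hd : treeDepth η₁ = treeDepth η₂) : η₁ = η₂ := by
  rcases hT.2 ξ η₁ η₂ h₁ h₂ with h | h
  · exact eq_of_treeDepth_eq_of_le h hd
  · exact (eq_of_treeDepth_eq_of_le h hd.symm).symm

theorem IsRootedTree.exists_le_treeDepth_eq {ξ : V} {i : ℕ} (hi : i ≤ treeDepth ξ) :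
    ∃ η ≤ ξ, treeDepth η = i := by
  have hinj : Set.InjOn treeDepth (↑({η | η ≤ ξ} : Finset V) : Set V) := fun η₁ h₁ η₂ h₂ hd =>
    hT.eq_of_le_of_treeDepth_eq (mem_filter.1 h₁).2 (mem_filter.1 h₂).2 hd
  have hcard : #{η | η ≤ ξ} = treeDepth ξ + 1 := by
    rw [treeDepth_eq_card, ← card_insert_of_notMem (s := {η | η < ξ}) (a := ξ) (by simp)]
    congr 1
    ext ζ
    simp [le_iff_eq_or_lt]
  have himage : ({η | η ≤ ξ} : Finset V).image treeDepth = range (treeDepth ξ + 1) := by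
    refine eq_of_subset_of_card_le (fun k hk => ?_) ?_
    · obtain ⟨η, hη, rfl⟩ := mem_image.1 hk
      exact mem_range.2 (Nat.lt_succ_of_le (treeDepth_mono (mem_filter.1 hη).2))
    · rw [card_image_of_injOn hinj, hcard, card_range]
  obtain ⟨η, hη, hd⟩ := mem_image.1 (himage ▸ mem_range.2 (Nat.lt_succ_of_le hi))
  exact ⟨η, (mem_filter.1 hη).2, hd⟩

theorem IsRootedTree.sum_chain_comp_treeDepth {ξs ξ : V} (hle : ξs ≤ ξ) (g : ℕ → ℝ) :
    ∑ η ∈ ({η | ξs ≤ η ∧ η ≤ ξ} : Finset V), g (treeDepth η)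
      = ∑ i ∈ Icc (treeDepth ξs) (treeDepth ξ), g i := by
  refine sum_nbij treeDepth (fun η hη => ?_) (fun η₁ h₁ η₂ h₂ hd => ?_) (fun i hi => ?_)
    fun _ _ => rfl
  · simp only [mem_filter, mem_univ, true_and] at hη
    exact mem_Icc.2 ⟨treeDepth_mono hη.1, treeDepth_mono hη.2⟩
  · simp only [coe_filter, Set.mem_ofPred_eq, mem_univ, true_and] at h₁ h₂
    exact hT.eq_of_le_of_treeDepth_eq h₁.2 h₂.2 hd
  · simp only [coe_Icc, Set.mem_Icc] at hi
    obtain ⟨η, hηξ, rfl⟩ := hT.exists_le_treeDepth_eq hi.2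
    refine ⟨η, ?_, rfl⟩
    simp only [coe_filter, Set.mem_ofPred_eq, mem_univ, true_and]
    rcases hT.2 ξ ξs η hle hηξ with h | h
    · exact ⟨h, hηξ⟩
    · rw [hT.eq_of_le_of_treeDepth_eq hle hηξ (le_antisymm hi.1 (treeDepth_mono h))]
      exact ⟨le_rfl, hηξ⟩

theorem IsRootedTree.treeDepth_of_covBy {ξ η : V} (h : ξ ⋖ η) :
    treeDepth η = treeDepth ξ + 1 := by
  have hlt := treeDepth_strictMono h.1
  by_contra hne
  obtain ⟨ζ, hζη, hζ⟩ := hT.exists_le_treeDepth_eq (show treeDepth ξ + 1 ≤ treeDepth η by omega)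
  have hξζ : ξ ≤ ζ := (hT.2 η ξ ζ h.1.le hζη).resolve_right fun h' => by
    have := treeDepth_mono h'
    omega
  exact h.2 (hξζ.lt_of_ne (by rintro rfl; omega)) (hζη.lt_of_ne (by rintro rfl; omega))

theorem IsRootedTree.card_treeDepth_eq_succ (k : ℕ) :
    #{η : V | treeDepth η = k + 1} = ∑ η ∈ ({η | treeDepth η = k} : Finset V), #{ζ | η ⋖ ζ} := by
  rw [← card_biUnion]
  · congr 1
    ext ζ
    simp only [mem_filter, mem_univ, true_and, mem_biUnion]
    constructor
    · intro hd
      obtain ⟨η, hle, hdep⟩ := hT.exists_le_treeDepth_eq (show k ≤ treeDepth ζ by omega)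
      refine ⟨η, hdep, hle.lt_of_ne (by rintro rfl; omega), fun μ h₁ h₂ => ?_⟩
      have := treeDepth_strictMono h₁
      have := treeDepth_strictMono h₂
      omega
    · rintro ⟨η, hdep, hcov⟩
      rw [hT.treeDepth_of_covBy hcov, hdep]
  · intro η₁ h₁ η₂ h₂ hne
    simp only [coe_filter, Set.mem_ofPred_eq, mem_univ, true_and] at h₁ h₂
    refine disjoint_left.2 fun ζ hz₁ hz₂ => hne ?_
    simp only [mem_filter, mem_univ, true_and] at hz₁ hz₂
    exact hT.eq_of_le_of_treeDepth_eq hz₁.1.le hz₂.1.le (h₁.trans h₂.symm)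

theorem IsRootedTree.card_treeDepth_eq {ξ₀ : V} (hroot : ∀ η, ξ₀ ≤ η) {K : ℕ} (b n : ℕ → ℝ)
    (hn0 : n 0 = 1) (hn : ∀ k, n (k + 1) = n k * b k)
    (hb : ∀ η : V, treeDepth η < K → (Nat.card {ζ // η ⋖ ζ} : ℝ) = b (treeDepth η)) :
    ∀ k ≤ K, (#{η : V | treeDepth η = k} : ℝ) = n k := by
  intro k
  induction k with
  | zero =>
    intro _
    have : ({η : V | treeDepth η = 0} : Finset V) = {ξ₀} := by
      ext η
      simp only [mem_filter, mem_univ, true_and, mem_singleton]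
      refine ⟨fun h => ?_, fun h => h ▸ treeDepth_eq_zero_of_forall_le hroot⟩
      exact (eq_of_treeDepth_eq_of_le (hroot η)
        (by rw [h, treeDepth_eq_zero_of_forall_le hroot])).symm
    simp [this, hn0]
  | succ k ih =>
    intro hk
    rw [hT.card_treeDepth_eq_succ, Nat.cast_sum, hn, ← ih (by omega), ← nsmul_eq_mul,
      ← sum_const]
    refine sum_congr rfl fun η hη => ?_
    rw [← (mem_filter.1 hη).2, ← hb η (by rw [(mem_filter.1 hη).2]; omega),
      Nat.card_eq_fintype_card, Fintype.card_subtype]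

end Tree

section PsiStar

theorem logb_two_floor_two_rpow_mem_Icc {x : ℝ} (hx : 0 ≤ x) :
    Real.logb 2 ⌊(2 : ℝ) ^ x⌋ ∈ Set.Icc (x - 1) x := by
  have h1 : (1 : ℝ) ≤ 2 ^ x := Real.one_le_rpow one_le_two hx
  have hfloor : (1 : ℝ) ≤ ⌊(2 : ℝ) ^ x⌋ := by exact_mod_cast Int.le_floor.2 (by exact_mod_cast h1)
  -- `⌊y⌋ ≥ y / 2` for `y ≥ 1`
  have hhalf : (2 : ℝ) ^ (x - 1) ≤ ⌊(2 : ℝ) ^ x⌋ := by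
    rw [Real.rpow_sub two_pos, Real.rpow_one]
    linarith [Int.sub_one_lt_floor ((2 : ℝ) ^ x)]
  constructor
  · calc x - 1 = Real.logb 2 (2 ^ (x - 1)) := (Real.logb_rpow two_pos (by norm_num)).symm
      _ ≤ _ := Real.logb_le_logb_of_le one_lt_two (by positivity) hhalf
  · calc Real.logb 2 ⌊(2 : ℝ) ^ x⌋ ≤ Real.logb 2 (2 ^ x) :=
          Real.logb_le_logb_of_le one_lt_two (by linarith) (Int.floor_le _)
      _ = x := Real.logb_rpow two_pos (by norm_num)

theorem psiStar_mem_Icc {ψ : ℕ → ℝ} (hψ : Monotone ψ) (hψ0 : ψ 0 = 0) (j : ℕ) :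
    psiStar ψ j ∈ Set.Icc (ψ j - 1) (ψ j) := by
  induction j with
  | zero => simp [psiStar, hψ0]
  | succ j ih =>
    obtain ⟨ih₁, ih₂⟩ := ih
    obtain ⟨h₁, h₂⟩ := logb_two_floor_two_rpow_mem_Icc (x := ψ (j + 1) - psiStar ψ j)
      (by linarith [hψ j.le_succ])
    simp only [psiStar, Set.mem_Icc]
    constructor <;> linarith

theorem two_rpow_sub_le_two_mul_two_rpow_psiStar_sub {ψ : ℕ → ℝ} (hψ : Monotone ψ)
    (hψ0 : ψ 0 = 0) (i j : ℕ) :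
    (2 : ℝ) ^ (ψ j - ψ i) ≤ 2 * 2 ^ (psiStar ψ j - psiStar ψ i) := by
  obtain ⟨hj, -⟩ := psiStar_mem_Icc hψ hψ0 j
  obtain ⟨-, hi⟩ := psiStar_mem_Icc hψ hψ0 i
  calc (2 : ℝ) ^ (ψ j - ψ i) ≤ 2 ^ (psiStar ψ j - psiStar ψ i + 1) :=
        Real.rpow_le_rpow_of_exponent_le one_le_two (by linarith)
    _ = 2 * 2 ^ (psiStar ψ j - psiStar ψ i) := by
        rw [Real.rpow_add_one two_ne_zero, mul_comm]

end PsiStar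

section HardyConstant

variable {V : Type} [Fintype V] [PartialOrder V]

def hardySum (p : ℝ) (u w f : V → ℝ) (ξs : V) : ℝ :=
  ∑ ξ ∈ ({ξ | ξs ≤ ξ} : Finset V), w ξ ^ p * (∑ ξ' ∈ ({ξ' | ξs ≤ ξ' ∧ ξ' ≤ ξ} : Finset V),
    u ξ' * f ξ') ^ p

variable {p : ℝ} {u w : V → ℝ} {ξs : V}

theorem SconstPQ_nonneg (p q : ℝ) (u w : V → ℝ) (ξs : V) : 0 ≤ SconstPQ p q u w ξs :=
  Real.sInf_nonneg fun _ hC => hC.1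

theorem hardySum_nonneg (hu : ∀ ξ, 0 ≤ u ξ) (hw : ∀ ξ, 0 ≤ w ξ) {f : V → ℝ}
    (hf : ∀ ξ, 0 ≤ f ξ) : 0 ≤ hardySum p u w f ξs :=
  sum_nonneg fun _ _ => mul_nonneg (Real.rpow_nonneg (hw _) _)
    (Real.rpow_nonneg (sum_nonneg fun _ _ => mul_nonneg (hu _) (hf _)) _)

theorem SconstPQ_eq_sInf (hp : 0 < p) (hu : ∀ ξ, 0 ≤ u ξ) (hw : ∀ ξ, 0 ≤ w ξ) :
    SconstPQ p p u w ξs = sInf {C : ℝ | 0 ≤ C ∧ ∀ f : V → ℝ, (∀ ξ, 0 ≤ f ξ) →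
      hardySum p u w f ξs ≤ C ^ p * ∑ ξ ∈ ({ξ | ξs ≤ ξ} : Finset V), f ξ ^ p} := by
  unfold SconstPQ
  congr 1
  ext C
  refine and_congr_right fun hC => forall_congr' fun f => imp_congr_right fun hf => ?_
  have hF : 0 ≤ ∑ ξ ∈ ({ξ | ξs ≤ ξ} : Finset V), f ξ ^ p :=
    sum_nonneg fun ξ _ => Real.rpow_nonneg (hf ξ) p
  change hardySum p u w f ξs ^ (1 / p) ≤ _ ↔ _
  rw [one_div, Real.rpow_inv_le_iff_of_pos (hardySum_nonneg hu hw hf)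
    (mul_nonneg hC (Real.rpow_nonneg hF _)) hp, Real.mul_rpow hC (Real.rpow_nonneg hF _),
    Real.rpow_inv_rpow hF hp.ne']

theorem exists_hardySum_le (hp : 0 < p) (hu : ∀ ξ, 0 ≤ u ξ) (hw : ∀ ξ, 0 ≤ w ξ) :
    ∃ D, 0 ≤ D ∧ ∀ f : V → ℝ, (∀ ξ, 0 ≤ f ξ) →
      hardySum p u w f ξs ≤ D * ∑ ξ ∈ ({ξ | ξs ≤ ξ} : Finset V), f ξ ^ p := by
  set A : Finset V := {ξ | ξs ≤ ξ}
  have hW : 0 ≤ ∑ ξ ∈ A, w ξ ^ p := sum_nonneg fun ξ _ => Real.rpow_nonneg (hw ξ) p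
  have hU : 0 ≤ ∑ ξ, u ξ := sum_nonneg fun ξ _ => hu ξ
  refine ⟨(∑ ξ ∈ A, w ξ ^ p) * (∑ ξ, u ξ) ^ p, mul_nonneg hW (Real.rpow_nonneg hU _),
    fun f hf => ?_⟩
  set F := ∑ ξ ∈ A, f ξ ^ p
  have hF : 0 ≤ F := sum_nonneg fun ξ _ => Real.rpow_nonneg (hf ξ) p
  have hfF : ∀ ξ ∈ A, f ξ ≤ F ^ p⁻¹ := fun ξ hξ => by
    rw [Real.le_rpow_inv_iff_of_pos (hf ξ) hF hp]
    exact single_le_sum (fun ξ _ => Real.rpow_nonneg (hf ξ) p) hξ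
  have hchain : ∀ ξ, ∑ ξ' ∈ ({ξ' | ξs ≤ ξ' ∧ ξ' ≤ ξ} : Finset V), u ξ' * f ξ'
      ≤ (∑ ξ, u ξ) * F ^ p⁻¹ := fun ξ => calc
    _ ≤ ∑ ξ' ∈ ({ξ' | ξs ≤ ξ' ∧ ξ' ≤ ξ} : Finset V), u ξ' * F ^ p⁻¹ :=
        sum_le_sum fun ξ' hξ' => mul_le_mul_of_nonneg_left
          (hfF ξ' (by simp only [A, mem_filter] at hξ' ⊢; exact ⟨mem_univ _, hξ'.2.1⟩)) (hu ξ')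
    _ ≤ ∑ ξ', u ξ' * F ^ p⁻¹ := sum_le_sum_of_subset_of_nonneg (subset_univ _)
        fun ξ' _ _ => mul_nonneg (hu ξ') (Real.rpow_nonneg hF _)
    _ = (∑ ξ, u ξ) * F ^ p⁻¹ := (sum_mul _ _ _).symm
  calc hardySum p u w f ξs ≤ ∑ ξ ∈ A, w ξ ^ p * ((∑ ξ, u ξ) * F ^ p⁻¹) ^ p :=
        sum_le_sum fun ξ _ => mul_le_mul_of_nonneg_left
          (Real.rpow_le_rpow (sum_nonneg fun _ _ => mul_nonneg (hu _) (hf _)) (hchain ξ) hp.le)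
          (Real.rpow_nonneg (hw ξ) p)
    _ = (∑ ξ ∈ A, w ξ ^ p) * (∑ ξ, u ξ) ^ p * F := by
        rw [Real.mul_rpow hU (Real.rpow_nonneg hF _), Real.rpow_inv_rpow hF hp.ne', ← sum_mul,
          mul_assoc]

theorem SconstPQ_le_rpow_inv (hp : 0 < p) (hu : ∀ ξ, 0 ≤ u ξ) (hw : ∀ ξ, 0 ≤ w ξ) {D : ℝ}
    (hD : 0 ≤ D) (h : ∀ f : V → ℝ, (∀ ξ, 0 ≤ f ξ) →
      hardySum p u w f ξs ≤ D * ∑ ξ ∈ ({ξ | ξs ≤ ξ} : Finset V), f ξ ^ p) :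
    SconstPQ p p u w ξs ≤ D ^ p⁻¹ := by
  rw [SconstPQ_eq_sInf hp hu hw]
  refine csInf_le ⟨0, fun C hC => hC.1⟩ ⟨Real.rpow_nonneg hD _, fun f hf => ?_⟩
  rw [Real.rpow_inv_rpow hD hp.ne']
  exact h f hf

theorem hardySum_le_SconstPQ_rpow_mul (hp : 0 < p) (hu : ∀ ξ, 0 ≤ u ξ) (hw : ∀ ξ, 0 ≤ w ξ)
    {f : V → ℝ} (hf : ∀ ξ, 0 ≤ f ξ) :
    hardySum p u w f ξs
      ≤ SconstPQ p p u w ξs ^ p * ∑ ξ ∈ ({ξ | ξs ≤ ξ} : Finset V), f ξ ^ p := by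
  set F := ∑ ξ ∈ ({ξ | ξs ≤ ξ} : Finset V), f ξ ^ p
  have hF : 0 ≤ F := sum_nonneg fun ξ _ => Real.rpow_nonneg (hf ξ) p
  obtain ⟨D, hD, hDf⟩ := exists_hardySum_le (ξs := ξs) hp hu hw
  have hne : ∃ C, 0 ≤ C ∧ ∀ f : V → ℝ, (∀ ξ, 0 ≤ f ξ) →
      hardySum p u w f ξs ≤ C ^ p * ∑ ξ ∈ ({ξ | ξs ≤ ξ} : Finset V), f ξ ^ p :=
    ⟨D ^ p⁻¹, Real.rpow_nonneg hD _, by rwa [Real.rpow_inv_rpow hD hp.ne']⟩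
  have hS := SconstPQ_nonneg p p u w ξs
  rcases hF.eq_or_lt with hF0 | hFpos
  · obtain ⟨C, _, hC⟩ := hne
    calc hardySum p u w f ξs ≤ C ^ p * F := hC f hf
      _ = SconstPQ p p u w ξs ^ p * F := by rw [← hF0, mul_zero, mul_zero]
  rw [← div_le_iff₀ hFpos, ← Real.rpow_le_rpow_iff (z := p⁻¹)
    (div_nonneg (hardySum_nonneg hu hw hf) hF) (Real.rpow_nonneg hS _) (inv_pos.2 hp),
    Real.rpow_rpow_inv hS hp.ne', SconstPQ_eq_sInf hp hu hw]
  refine le_csInf hne fun C ⟨hC, hCf⟩ => ?_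
  rw [Real.rpow_inv_le_iff_of_pos (div_nonneg (hardySum_nonneg hu hw hf) hF) hC hp,
    div_le_iff₀ hFpos]
  exact hCf f hf

theorem rpow_sub_one_mul_le_SconstPQ_rpow (hp : 0 < p) (hu : ∀ ξ, 0 ≤ u ξ) (hw : ∀ ξ, 0 ≤ w ξ)
    {f : V → ℝ} (hf : ∀ ξ, 0 ≤ f ξ) {U W : ℝ} (hU : 0 < U)
    (hnorm : ∑ ξ ∈ ({ξ | ξs ≤ ξ} : Finset V), f ξ ^ p = U) (h : U ^ p * W ≤ hardySum p u w f ξs) :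
    U ^ (p - 1) * W ≤ SconstPQ p p u w ξs ^ p := by
  have h' := h.trans (hardySum_le_SconstPQ_rpow_mul hp hu hw hf)
  rw [hnorm, mul_comm (U ^ p), ← sub_add_cancel p 1, Real.rpow_add_one hU.ne', sub_add_cancel,
    ← mul_assoc] at h'
  exact le_of_mul_le_mul_right (by rwa [mul_comm W] at h') hU

end HardyConstant

theorem sum_comp_eq_sum_Icc_card_mul {α : Type*} (s : Finset α) (g : α → ℕ) {a b : ℕ}
    (h : ∀ x ∈ s, g x ∈ Icc a b) (F : ℕ → ℝ) :
    ∑ x ∈ s, F (g x) = ∑ j ∈ Icc a b, (#{x ∈ s | g x = j} : ℝ) * F j := by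
  classical
  rw [← sum_fiberwise_of_maps_to h]
  refine sum_congr rfl fun j _ => ?_
  rw [sum_congr rfl fun x hx => by rw [(mem_filter.1 hx).2], sum_const, nsmul_eq_mul]

theorem sum_Icc_ite_le {a b m : ℕ} (hmb : m ≤ b) (h : ℕ → ℝ) :
    ∑ k ∈ Icc a b, (if k ≤ m then h k else 0) = ∑ k ∈ Icc a m, h k := by
  rw [← sum_filter]
  congr 1
  ext k
  simp only [mem_filter, mem_Icc]
  omega

/- The sums below describe level-constant weights `u`, `w` on a tree with `n k` vertices on
level `k`; `q` is the conjugate exponent of `p`. -/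

def levelPartialSum (q : ℝ) (u n : ℕ → ℝ) (a i : ℕ) : ℝ :=
  ∑ l ∈ Icc a i, u l ^ q * n l ^ (1 - q)

def levelTailSum (p : ℝ) (w n : ℕ → ℝ) (j b : ℕ) : ℝ :=
  ∑ k ∈ Icc j b, n k * w k ^ p

/-- The discrete Muckenhoupt quantity on levels `a, …, b`, split at level `m`. -/
def levelMuckenhoupt (p q : ℝ) (u w n : ℕ → ℝ) (a b m : ℕ) : ℝ :=
  levelPartialSum q u n a m ^ (p - 1) * levelTailSum p w n m b

theorem levelMuckenhoupt_add_left (p q : ℝ) (u w n : ℕ → ℝ) (j a b m : ℕ) :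
    levelMuckenhoupt p q (fun k => u (j + k)) (fun k => w (j + k)) (fun k => n (j + k)) a b m
      = levelMuckenhoupt p q u w n (j + a) (j + b) (j + m) := by
  simp only [levelMuckenhoupt, levelPartialSum, levelTailSum, ← map_add_left_Icc, sum_map,
    addLeftEmbedding_apply]

section LevelSums

variable {p q : ℝ} {u w n : ℕ → ℝ}

theorem levelPartialSum_pos (hu : ∀ k, 0 < u k) (hn : ∀ k, 0 < n k) {a i : ℕ} (hai : a ≤ i) :
    0 < levelPartialSum q u n a i :=
  sum_pos (fun l _ => mul_pos (Real.rpow_pos_of_pos (hu l) _) (Real.rpow_pos_of_pos (hn l) _))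
    (nonempty_Icc.2 hai)

theorem levelTailSum_pos (hw : ∀ k, 0 < w k) (hn : ∀ k, 0 < n k) {j b : ℕ} (hjb : j ≤ b) :
    0 < levelTailSum p w n j b :=
  sum_pos (fun k _ => mul_pos (hn k) (Real.rpow_pos_of_pos (hw k) _)) (nonempty_Icc.2 hjb)

theorem nonneg_of_forall_levelMuckenhoupt_le (hu : ∀ k, 0 ≤ u k) (hw : ∀ k, 0 ≤ w k)
    (hn : ∀ k, 0 ≤ n k) {a b : ℕ} (hab : a ≤ b) {G : ℝ}
    (hG : ∀ m ∈ Icc a b, levelMuckenhoupt p q u w n a b m ≤ G) : 0 ≤ G :=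
  (mul_nonneg (Real.rpow_nonneg (sum_nonneg fun l _ => mul_nonneg
    (Real.rpow_nonneg (hu l) _) (Real.rpow_nonneg (hn l) _)) _)
    (sum_nonneg fun k _ => mul_nonneg (hn k) (Real.rpow_nonneg (hw k) _))).trans
    (hG a (mem_Icc.2 ⟨le_rfl, hab⟩))

end LevelSums

section LowerBound

variable {A : Type} [Fintype A] [PartialOrder A] {p q : ℝ} {u w n : ℕ → ℝ}

theorem sum_filter_le_treeDepth_eq {K : ℕ} (hdep : ∀ η : A, treeDepth η ≤ K)
    (hlevel : ∀ k ≤ K, (#{η : A | treeDepth η = k} : ℝ) = n k) (m : ℕ) (F : ℕ → ℝ) :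
    ∑ η ∈ ({η | m ≤ treeDepth η} : Finset A), F (treeDepth η) = ∑ k ∈ Icc m K, n k * F k := by
  rw [sum_comp_eq_sum_Icc_card_mul _ _ fun η hη => mem_Icc.2 ⟨(mem_filter.1 hη).2, hdep η⟩]
  refine sum_congr rfl fun k hk => ?_
  rw [filter_filter, filter_congr fun η _ => and_iff_right_of_imp fun h => h ▸ (mem_Icc.1 hk).1,
    hlevel k (mem_Icc.1 hk).2]

theorem IsRootedTree.levelMuckenhoupt_le_SconstPQ_rpow (hT : IsRootedTree A)
    (hpq : p.HolderConjugate q) (hu : ∀ k, 0 < u k) (hw : ∀ k, 0 ≤ w k) (hn : ∀ k, 0 < n k)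
    {ξ₀ : A} (hroot : ∀ η, ξ₀ ≤ η) {K : ℕ} (hdep : ∀ η : A, treeDepth η ≤ K)
    (hlevel : ∀ k ≤ K, (#{η : A | treeDepth η = k} : ℝ) = n k) {m : ℕ} (hm : m ≤ K) :
    levelMuckenhoupt p q u w n 0 K m
      ≤ SconstPQ p p (fun η => u (treeDepth η)) (fun η => w (treeDepth η)) ξ₀ ^ p := by
  have hp := hpq.pos
  set U := levelPartialSum q u n 0 m
  set W := levelTailSum p w n m K
  have hU : 0 < U := levelPartialSum_pos hu hn (Nat.zero_le m)
  -- the extremal function of the one-dimensional weighted Hardy inequality, cut off above level `m`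
  set g : ℕ → ℝ := fun k => if k ≤ m then u k ^ (q - 1) * n k ^ (1 - q) else 0
  have hg : ∀ k, 0 ≤ g k := fun k => by
    simp only [g]
    split_ifs
    exacts [mul_nonneg (Real.rpow_nonneg (hu k).le _) (Real.rpow_nonneg (hn k).le _), le_rfl]
  have hall : ({η | ξ₀ ≤ η} : Finset A) = ({η | 0 ≤ treeDepth η} : Finset A) := by
    simp only [hroot, Nat.zero_le]
  have hnorm : ∑ η ∈ ({η | ξ₀ ≤ η} : Finset A), g (treeDepth η) ^ p = U := by
    rw [hall, sum_filter_le_treeDepth_eq hdep hlevel 0 fun k => g k ^ p]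
    refine (sum_congr rfl fun k _ => ?_).trans (sum_Icc_ite_le hm fun k => u k ^ q * n k ^ (1 - q))
    simp only [g]
    split_ifs
    · exact hpq.mul_rpow_extremal_eq (hu k) (hn k)
    · rw [Real.zero_rpow hp.ne', mul_zero]
  have hchain : ∀ η : A, m ≤ treeDepth η →
      ∑ η' ∈ ({η' | ξ₀ ≤ η' ∧ η' ≤ η} : Finset A), u (treeDepth η') * g (treeDepth η') = U := by
    intro η hη
    rw [hT.sum_chain_comp_treeDepth (hroot η) fun k => u k * g k,
      treeDepth_eq_zero_of_forall_le hroot]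
    refine (sum_congr rfl fun k _ => ?_).trans (sum_Icc_ite_le hη fun k => u k ^ q * n k ^ (1 - q))
    simp only [g]
    split_ifs
    · rw [← mul_assoc, mul_comm (u k), ← Real.rpow_add_one (hu k).ne', sub_add_cancel]
    · rw [mul_zero]
  have hlower : U ^ p * W ≤ hardySum p (fun η => u (treeDepth η)) (fun η => w (treeDepth η))
      (fun η => g (treeDepth η)) ξ₀ := calc
    U ^ p * W = ∑ η ∈ ({η | m ≤ treeDepth η} : Finset A), w (treeDepth η) ^ p * U ^ p := by
      rw [sum_filter_le_treeDepth_eq hdep hlevel m fun k => w k ^ p * U ^ p]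
      simp only [W, levelTailSum, mul_sum]
      exact sum_congr rfl fun k _ => by ring
    _ = ∑ η ∈ ({η | m ≤ treeDepth η} : Finset A), w (treeDepth η) ^ p
        * (∑ η' ∈ ({η' | ξ₀ ≤ η' ∧ η' ≤ η} : Finset A), u (treeDepth η') * g (treeDepth η')) ^ p :=
      sum_congr rfl fun η hη => by rw [hchain η (mem_filter.1 hη).2]
    _ ≤ _ := sum_le_sum_of_subset_of_nonneg (by simp [hroot]) fun η _ _ =>
        mul_nonneg (Real.rpow_nonneg (hw _) _) (Real.rpow_nonneg
          (sum_nonneg fun _ _ => mul_nonneg (hu _).le (hg _)) _)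
  exact rpow_sub_one_mul_le_SconstPQ_rpow hp (fun _ => (hu _).le) (fun _ => hw _) (fun _ => hg _)
    hU hnorm hlower

end LowerBound

section UpperBound

variable {V : Type} [Fintype V] [PartialOrder V] {p q : ℝ} {u w n : ℕ → ℝ} {ξs : V}

/-- Hölder's inequality along the chain `[ξs, ξ]`, with the weights `n U ^ (1/q)` that make the
`q`-sum telescope. -/
theorem IsRootedTree.rpow_sum_chain_le (hT : IsRootedTree V) (hpq : p.HolderConjugate q)
    (hu : ∀ k, 0 < u k) (hn : ∀ k, 0 < n k) {f : V → ℝ} (hf : ∀ ξ, 0 ≤ f ξ) {ξ : V}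
    (hξ : ξs ≤ ξ) :
    (∑ η ∈ ({η | ξs ≤ η ∧ η ≤ ξ} : Finset V), u (treeDepth η) * f η) ^ p
      ≤ q ^ (p - 1) * levelPartialSum q u n (treeDepth ξs) (treeDepth ξ) ^ ((p - 1) / q)
        * ∑ η ∈ ({η | ξs ≤ η ∧ η ≤ ξ} : Finset V),
            n (treeDepth η) * levelPartialSum q u n (treeDepth ξs) (treeDepth η) ^ q⁻¹
              * f η ^ p := by
  set U := levelPartialSum q u n (treeDepth ξs)
  set s : Finset V := {η | ξs ≤ η ∧ η ≤ ξ}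
  have hq := hpq.symm.pos
  have hds : ∀ η ∈ s, treeDepth ξs ≤ treeDepth η := fun η hη =>
    treeDepth_mono (mem_filter.1 hη).2.1
  have hU : ∀ η ∈ s, 0 < U (treeDepth η) := fun η hη => levelPartialSum_pos hu hn (hds η hη)
  have hlam : ∀ η ∈ s, 0 < n (treeDepth η) * U (treeDepth η) ^ q⁻¹ := fun η hη =>
    mul_pos (hn _) (Real.rpow_pos_of_pos (hU η hη) _)
  have hexp : q⁻¹ * (1 - q) = q⁻¹ - 1 := by field_simp
  have htel : ∑ η ∈ s, u (treeDepth η) ^ q * (n (treeDepth η) * U (treeDepth η) ^ q⁻¹) ^ (1 - q)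
      ≤ q * U (treeDepth ξ) ^ q⁻¹ := calc
    _ = ∑ η ∈ s, (fun i => u i ^ q * n i ^ (1 - q) * U i ^ (q⁻¹ - 1)) (treeDepth η) :=
      sum_congr rfl fun η hη => by
        rw [Real.mul_rpow (hn _).le (Real.rpow_nonneg (hU η hη).le _),
          ← Real.rpow_mul (hU η hη).le, hexp, ← mul_assoc]
    _ = ∑ i ∈ Icc (treeDepth ξs) (treeDepth ξ), u i ^ q * n i ^ (1 - q) * U i ^ (q⁻¹ - 1) :=
      hT.sum_chain_comp_treeDepth hξ fun i => u i ^ q * n i ^ (1 - q) * U i ^ (q⁻¹ - 1)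
    _ ≤ q⁻¹⁻¹ * U (treeDepth ξ) ^ q⁻¹ :=
      sum_Icc_mul_rpow_partialSum_le (inv_pos.2 hq) (inv_lt_one_of_one_lt₀ hpq.symm.lt) _
        (fun l => mul_nonneg (Real.rpow_nonneg (hu l).le _) (Real.rpow_nonneg (hn l).le _)) _ _
    _ = q * U (treeDepth ξ) ^ q⁻¹ := by rw [inv_inv]
  calc (∑ η ∈ s, u (treeDepth η) * f η) ^ p
      ≤ (∑ η ∈ s, u (treeDepth η) ^ q * (n (treeDepth η) * U (treeDepth η) ^ q⁻¹) ^ (1 - q))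
          ^ (p - 1) * ∑ η ∈ s, n (treeDepth η) * U (treeDepth η) ^ q⁻¹ * f η ^ p :=
        hpq.rpow_sum_mul_le s (fun η _ => (hu _).le) (fun η _ => hf η) hlam
    _ ≤ (q * U (treeDepth ξ) ^ q⁻¹) ^ (p - 1)
          * ∑ η ∈ s, n (treeDepth η) * U (treeDepth η) ^ q⁻¹ * f η ^ p := by
        gcongr
        · exact sum_nonneg fun η hη => mul_nonneg (hlam η hη).le (Real.rpow_nonneg (hf η) _)
        · exact sum_nonneg fun η hη => mul_nonneg (Real.rpow_nonneg (hu _).le _)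
            (Real.rpow_nonneg (hlam η hη).le _)
        · linarith [hpq.lt]
    _ = _ := by
        rw [Real.mul_rpow hq.le (Real.rpow_nonneg (levelPartialSum_pos hu hn
          (treeDepth_mono hξ)).le _), ← Real.rpow_mul (levelPartialSum_pos hu hn
          (treeDepth_mono hξ)).le, inv_mul_eq_div]

variable {N : ℕ} {C G : ℝ}

/-- Summed over the subtree above `η`, the weights left by `IsRootedTree.rpow_sum_chain_le`
telescope once the growth bound turns the sum into a level sum. -/
theorem sum_subtree_le_of_levelMuckenhoupt_le (hpq : p.HolderConjugate q) (hu : ∀ k, 0 < u k)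
    (hw : ∀ k, 0 < w k) (hn : ∀ k, 0 < n k) (hdep : ∀ ξ : V, treeDepth ξ ≤ N) (hC : 0 ≤ C)
    (hgrowth : ∀ ξ', ξs ≤ ξ' → ∀ j, treeDepth ξ' ≤ j →
      (#{ξ | ξ' ≤ ξ ∧ treeDepth ξ = j} : ℝ) ≤ C * (n j / n (treeDepth ξ')))
    (hG : ∀ m ∈ Icc (treeDepth ξs) N, levelMuckenhoupt p q u w n (treeDepth ξs) N m ≤ G)
    {η : V} (hη : ξs ≤ η) :
    ∑ ξ ∈ ({ξ | η ≤ ξ} : Finset V),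
        w (treeDepth ξ) ^ p * levelPartialSum q u n (treeDepth ξs) (treeDepth ξ) ^ ((p - 1) / q)
      ≤ C * p * G ^ q⁻¹ * levelTailSum p w n (treeDepth η) N ^ p⁻¹ / n (treeDepth η) := by
  set U := levelPartialSum q u n (treeDepth ξs)
  set W := levelTailSum p w n
  have hp := hpq.pos
  have hq := hpq.symm.pos
  have hG0 := nonneg_of_forall_levelMuckenhoupt_le (fun k => (hu k).le) (fun k => (hw k).le)
    (fun k => (hn k).le) (hdep ξs) hG
  have hUW : ∀ j ∈ Icc (treeDepth ξs) N, U j ^ ((p - 1) / q) ≤ G ^ q⁻¹ * W j N ^ (-q⁻¹) :=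
    fun j hj => rpow_div_le_of_rpow_mul_le hq (levelPartialSum_pos hu hn (mem_Icc.1 hj).1).le
      (levelTailSum_pos hw hn (mem_Icc.1 hj).2) (hG j hj)
  have hdη := treeDepth_mono hη
  calc ∑ ξ ∈ ({ξ | η ≤ ξ} : Finset V), w (treeDepth ξ) ^ p * U (treeDepth ξ) ^ ((p - 1) / q)
      = ∑ j ∈ Icc (treeDepth η) N,
          (#{ξ ∈ ({ξ | η ≤ ξ} : Finset V) | treeDepth ξ = j} : ℝ)
            * (w j ^ p * U j ^ ((p - 1) / q)) :=
        sum_comp_eq_sum_Icc_card_mul _ _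
          (fun ξ hξ => mem_Icc.2 ⟨treeDepth_mono (mem_filter.1 hξ).2, hdep ξ⟩)
          fun j => w j ^ p * U j ^ ((p - 1) / q)
    _ ≤ ∑ j ∈ Icc (treeDepth η) N,
          C * (n j / n (treeDepth η)) * (w j ^ p * (G ^ q⁻¹ * W j N ^ (-q⁻¹))) := by
        refine sum_le_sum fun j hj => ?_
        rw [filter_filter]
        refine mul_le_mul (hgrowth η hη j (mem_Icc.1 hj).1) (mul_le_mul_of_nonneg_left
          (hUW j (mem_Icc.2 ⟨hdη.trans (mem_Icc.1 hj).1, (mem_Icc.1 hj).2⟩))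
          (Real.rpow_nonneg (hw j).le _))
          (mul_nonneg (Real.rpow_nonneg (hw j).le _) (Real.rpow_nonneg (levelPartialSum_pos hu hn
            (hdη.trans (mem_Icc.1 hj).1)).le _))
          (mul_nonneg hC (div_nonneg (hn j).le (hn _).le))
    _ = C * G ^ q⁻¹ / n (treeDepth η)
          * ∑ j ∈ Icc (treeDepth η) N, n j * w j ^ p * W j N ^ (p⁻¹ - 1) := by
        rw [mul_sum, hpq.inv_sub_one]
        refine sum_congr rfl fun j _ => ?_
        ring
    _ ≤ C * G ^ q⁻¹ / n (treeDepth η) * (p⁻¹⁻¹ * W (treeDepth η) N ^ p⁻¹) := by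
        refine mul_le_mul_of_nonneg_left (sum_Icc_mul_rpow_tailSum_le (inv_pos.2 hp)
          (inv_lt_one_of_one_lt₀ hpq.lt) (fun k => n k * w k ^ p)
          (fun k => mul_nonneg (hn k).le (Real.rpow_nonneg (hw k).le _)) _ _) ?_
        exact div_nonneg (mul_nonneg hC (Real.rpow_nonneg hG0 _)) (hn _).le
    _ = _ := by
        rw [inv_inv]
        ring

theorem sum_filter_le_sum_chain_comm (ξs : V) (F : V → V → ℝ) :
    ∑ ξ ∈ ({ξ | ξs ≤ ξ} : Finset V), ∑ η ∈ ({η | ξs ≤ η ∧ η ≤ ξ} : Finset V), F ξ η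
      = ∑ η ∈ ({η | ξs ≤ η} : Finset V), ∑ ξ ∈ ({ξ | η ≤ ξ} : Finset V), F ξ η := by
  refine sum_comm' fun ξ η => ?_
  simp only [mem_filter, mem_univ, true_and]
  exact ⟨fun ⟨_, h₁, h₂⟩ => ⟨h₂, h₁⟩, fun ⟨h₂, h₁⟩ => ⟨h₁.trans h₂, h₁, h₂⟩⟩

theorem IsRootedTree.hardySum_le_of_levelMuckenhoupt_le (hT : IsRootedTree V)
    (hpq : p.HolderConjugate q) (hu : ∀ k, 0 < u k) (hw : ∀ k, 0 < w k) (hn : ∀ k, 0 < n k)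
    (hdep : ∀ ξ : V, treeDepth ξ ≤ N) (hC : 0 ≤ C)
    (hgrowth : ∀ ξ', ξs ≤ ξ' → ∀ j, treeDepth ξ' ≤ j →
      (#{ξ | ξ' ≤ ξ ∧ treeDepth ξ = j} : ℝ) ≤ C * (n j / n (treeDepth ξ')))
    (hG : ∀ m ∈ Icc (treeDepth ξs) N, levelMuckenhoupt p q u w n (treeDepth ξs) N m ≤ G)
    {f : V → ℝ} (hf : ∀ ξ, 0 ≤ f ξ) :
    hardySum p (fun ξ => u (treeDepth ξ)) (fun ξ => w (treeDepth ξ)) f ξs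
      ≤ C * p * q ^ (p - 1) * G * ∑ ξ ∈ ({ξ | ξs ≤ ξ} : Finset V), f ξ ^ p := by
  have hp := hpq.pos
  have hq := hpq.symm.pos
  have hG0 := nonneg_of_forall_levelMuckenhoupt_le (fun k => (hu k).le) (fun k => (hw k).le)
    (fun k => (hn k).le) (hdep ξs) hG
  set U := levelPartialSum q u n (treeDepth ξs)
  set W := levelTailSum p w n
  set A : Finset V := {ξ | ξs ≤ ξ}
  set a : V → ℝ := fun η => n (treeDepth η) * U (treeDepth η) ^ q⁻¹ * f η ^ p
  set b : V → ℝ := fun ξ => w (treeDepth ξ) ^ p * U (treeDepth ξ) ^ ((p - 1) / q)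
  have ha : ∀ η ∈ A, 0 ≤ a η := fun η hη => mul_nonneg (mul_nonneg (hn _).le (Real.rpow_nonneg
    (levelPartialSum_pos hu hn (treeDepth_mono (mem_filter.1 hη).2)).le _))
    (Real.rpow_nonneg (hf η) _)
  have hUW : ∀ η ∈ A, U (treeDepth η) ^ q⁻¹ * W (treeDepth η) N ^ p⁻¹ ≤ G ^ p⁻¹ := by
    intro η hη
    have hdη := treeDepth_mono (mem_filter.1 hη).2
    have hU := (levelPartialSum_pos (q := q) hu hn hdη).le
    have hW := (levelTailSum_pos (p := p) hw hn (hdep η)).le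
    rw [hpq.rpow_inv_mul_rpow_inv_eq hU hW]
    exact Real.rpow_le_rpow (mul_nonneg (Real.rpow_nonneg hU _) hW)
      (hG _ (mem_Icc.2 ⟨hdη, hdep η⟩)) (inv_nonneg.2 hp.le)
  calc hardySum p (fun ξ => u (treeDepth ξ)) (fun ξ => w (treeDepth ξ)) f ξs
      ≤ ∑ ξ ∈ A, w (treeDepth ξ) ^ p * (q ^ (p - 1) * U (treeDepth ξ) ^ ((p - 1) / q)
          * ∑ η ∈ ({η | ξs ≤ η ∧ η ≤ ξ} : Finset V), a η) :=
        sum_le_sum fun ξ hξ => mul_le_mul_of_nonneg_left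
          (hT.rpow_sum_chain_le hpq hu hn hf (mem_filter.1 hξ).2) (Real.rpow_nonneg (hw _).le _)
    _ = q ^ (p - 1) * ∑ η ∈ A, a η * ∑ ξ ∈ ({ξ | η ≤ ξ} : Finset V), b ξ := by
        simp only [mul_sum, A, sum_filter_le_sum_chain_comm]
        exact sum_congr rfl fun η _ => sum_congr rfl fun ξ _ => by ring
    _ ≤ q ^ (p - 1) * ∑ η ∈ A, a η
          * (C * p * G ^ q⁻¹ * W (treeDepth η) N ^ p⁻¹ / n (treeDepth η)) :=
        mul_le_mul_of_nonneg_left (sum_le_sum fun η hη => mul_le_mul_of_nonneg_left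
          (sum_subtree_le_of_levelMuckenhoupt_le hpq hu hw hn hdep hC hgrowth hG
            (mem_filter.1 hη).2) (ha η hη)) (Real.rpow_nonneg hq.le _)
    _ = C * p * q ^ (p - 1) * G ^ q⁻¹
          * ∑ η ∈ A, U (treeDepth η) ^ q⁻¹ * W (treeDepth η) N ^ p⁻¹ * f η ^ p := by
        simp only [mul_sum]
        refine sum_congr rfl fun η _ => ?_
        simp only [a]
        field_simp [(hn (treeDepth η)).ne']
    _ ≤ C * p * q ^ (p - 1) * G ^ q⁻¹ * ∑ η ∈ A, G ^ p⁻¹ * f η ^ p :=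
        mul_le_mul_of_nonneg_left (sum_le_sum fun η hη => mul_le_mul_of_nonneg_right
          (hUW η hη) (Real.rpow_nonneg (hf η) _)) (by positivity)
    _ = C * p * q ^ (p - 1) * G * ∑ η ∈ A, f η ^ p := by
        rw [← mul_sum, ← mul_assoc, mul_assoc _ (G ^ q⁻¹),
          ← Real.rpow_add' hG0 (by rw [add_comm, hpq.inv_add_inv_eq_one]; exact one_ne_zero),
          add_comm, hpq.inv_add_inv_eq_one, Real.rpow_one]

theorem IsRootedTree.SconstPQ_le_of_levelMuckenhoupt_le (hT : IsRootedTree V)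
    (hpq : p.HolderConjugate q) (hu : ∀ k, 0 < u k) (hw : ∀ k, 0 < w k) (hn : ∀ k, 0 < n k)
    (hdep : ∀ ξ : V, treeDepth ξ ≤ N) (hC : 0 ≤ C)
    (hgrowth : ∀ ξ', ξs ≤ ξ' → ∀ j, treeDepth ξ' ≤ j →
      (#{ξ | ξ' ≤ ξ ∧ treeDepth ξ = j} : ℝ) ≤ C * (n j / n (treeDepth ξ')))
    (hG : ∀ m ∈ Icc (treeDepth ξs) N, levelMuckenhoupt p q u w n (treeDepth ξs) N m ≤ G) :
    SconstPQ p p (fun ξ => u (treeDepth ξ)) (fun ξ => w (treeDepth ξ)) ξs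
      ≤ (C * p * q ^ (p - 1) * G) ^ p⁻¹ := by
  have hp := hpq.pos
  have hq := hpq.symm.pos
  have hG0 := nonneg_of_forall_levelMuckenhoupt_le (fun k => (hu k).le) (fun k => (hw k).le)
    (fun k => (hn k).le) (hdep ξs) hG
  exact SconstPQ_le_rpow_inv hp (fun _ => (hu _).le) (fun _ => (hw _).le) (by positivity)
    fun f hf => hT.hardySum_le_of_levelMuckenhoupt_le hpq hu hw hn hdep hC hgrowth hG hf

end UpperBound

section ReferenceTree

variable {ψ : ℕ → ℝ} {j₀ : ℕ}

theorem card_le_two_mul_psiStar_ratio {V : Type} [Fintype V] [PartialOrder V] {Cstar : ℝ}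
    (hCstar : 0 ≤ Cstar) (hψ : Monotone ψ) (hψ0 : ψ 0 = 0)
    (hcard : ∀ j₀ j : ℕ, j₀ ≤ j → ∀ ξ : V, treeDepth ξ = j₀ →
      (Nat.card {η : V // ξ ≤ η ∧ treeDepth η = j} : ℝ) ≤ Cstar * (2 : ℝ) ^ (ψ j - ψ j₀))
    (ξ' : V) (j : ℕ) (hj : treeDepth ξ' ≤ j) :
    (#{ξ | ξ' ≤ ξ ∧ treeDepth ξ = j} : ℝ)
      ≤ 2 * Cstar * ((2 : ℝ) ^ (psiStar ψ j - psiStar ψ j₀)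
        / 2 ^ (psiStar ψ (treeDepth ξ') - psiStar ψ j₀)) := by
  have h := hcard _ j hj ξ' rfl
  rw [Nat.card_eq_fintype_card, Fintype.card_subtype] at h
  calc _ ≤ Cstar * 2 ^ (ψ j - ψ (treeDepth ξ')) := h
    _ ≤ Cstar * (2 * 2 ^ (psiStar ψ j - psiStar ψ (treeDepth ξ'))) :=
      mul_le_mul_of_nonneg_left (two_rpow_sub_le_two_mul_two_rpow_psiStar_sub hψ hψ0 _ _) hCstar
    _ = _ := by
      rw [← Real.rpow_sub two_pos]
      ring_nf

theorem IsRootedTree.levelMuckenhoupt_psiStar_le_SconstPQ_rpow {A : Type} [Fintype A]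
    [PartialOrder A] (hT : IsRootedTree A) {p q : ℝ} (hpq : p.HolderConjugate q) {u w : ℕ → ℝ}
    (hu : ∀ k, 0 < u k) (hw : ∀ k, 0 ≤ w k) {ξ₀ : A} (hroot : ∀ η, ξ₀ ≤ η) {N : ℕ}
    (hdep : ∀ η : A, treeDepth η ≤ N - j₀)
    (hbranch : ∀ η : A, treeDepth η < N - j₀ → (Nat.card {η' : A // η ⋖ η'} : ℝ)
        = (2 : ℝ) ^ (psiStar ψ (j₀ + treeDepth η + 1) - psiStar ψ (j₀ + treeDepth η)))
    {m : ℕ} (hm : m ∈ Icc j₀ N) :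
    levelMuckenhoupt p q u w (fun j => 2 ^ (psiStar ψ j - psiStar ψ j₀)) j₀ N m
      ≤ SconstPQ p p (fun η => u (j₀ + treeDepth η)) (fun η => w (j₀ + treeDepth η)) ξ₀ ^ p := by
  set n : ℕ → ℝ := fun j => 2 ^ (psiStar ψ j - psiStar ψ j₀)
  have hlevel : ∀ k ≤ N - j₀, (#{η : A | treeDepth η = k} : ℝ) = n (j₀ + k) :=
    hT.card_treeDepth_eq hroot
      (fun k => 2 ^ (psiStar ψ (j₀ + k + 1) - psiStar ψ (j₀ + k))) (fun k => n (j₀ + k))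
      (by simp [n]) (fun k => by
        simp only [n]
        rw [← Real.rpow_add two_pos, ← add_assoc]
        congr 1
        ring) hbranch
  have h := hT.levelMuckenhoupt_le_SconstPQ_rpow hpq (u := fun k => u (j₀ + k))
    (w := fun k => w (j₀ + k)) (fun k => hu _) (fun k => hw _)
    (fun k => Real.rpow_pos_of_pos two_pos _) hroot hdep hlevel (m := m - j₀) (by grind)
  have e := levelMuckenhoupt_add_left p q u w n j₀ 0 (N - j₀) (m - j₀)
  rw [add_zero, Nat.add_sub_cancel' (by grind), Nat.add_sub_cancel' (mem_Icc.1 hm).1] at e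
  rw [← e]
  exact h

end ReferenceTree

/-- comparison of Hardy constants between the original tree and the
regular reference tree `Â`: `𝔖_{A_{ξs},u,w} ≤ c · 𝔖_{Â,û,ŵ}`. -/
theorem statement11 (p : ℝ) (hp : 1 < p) (Cstar : ℝ) (hCstar : 1 ≤ Cstar) :
    ∃ σ₂ : ℝ, 0 < σ₂ ∧
    ∀ Chat : ℝ, 1 ≤ Chat →
    ∃ c : ℝ, 0 < c ∧
    ∀ (V : Type) [Fintype V] [PartialOrder V], IsRootedTree V →
    ∀ N : ℕ, (∀ ξ : V, treeDepth ξ ≤ N) → (∃ ξ : V, treeDepth ξ = N) →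
    ∀ ψ : ℕ → ℝ, (∀ j : ℕ, 0 ≤ ψ j) → Monotone ψ → ψ 0 = 0 →
    (∀ j₀ j : ℕ, j₀ ≤ j → ∀ ξ : V, treeDepth ξ = j₀ →
      (Nat.card {η : V // ξ ≤ η ∧ treeDepth η = j} : ℝ)
        ≤ Cstar * (2 : ℝ) ^ (ψ j - ψ j₀)) →
    (∀ ξ : V, (Nat.card {η : V // ξ ⋖ η} : ℝ) ≤ Chat) →
    ∀ u w : ℕ → ℝ, (∀ j : ℕ, 0 < u j) → (∀ j : ℕ, 0 < w j) →
    (∀ j : ℕ, Chat⁻¹ ≤ u j / u (j + 1) ∧ u j / u (j + 1) ≤ Chat ∧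
      Chat⁻¹ ≤ w j / w (j + 1) ∧ w j / w (j + 1) ≤ Chat) →
    ∀ σ : ℝ, 0 < σ → σ < σ₂ →
    (∀ j : ℕ, σ ^ (-((p - 1) / p)) * (u j * (2 : ℝ) ^ (-(ψ j) / p))
        ≤ u (j + 1) * (2 : ℝ) ^ (-(ψ (j + 1)) / p)) →
    (∀ j : ℕ, w (j + 1) * (2 : ℝ) ^ (ψ (j + 1) / p)
        ≤ σ ^ (1 / p) * (w j * (2 : ℝ) ^ (ψ j / p))) →
    ∀ ξs : V, ∀ j₀ : ℕ, treeDepth ξs = j₀ →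
    ∀ (Ahat : Type) [Fintype Ahat] [PartialOrder Ahat], IsRootedTree Ahat →
    ∀ ξhat : Ahat, (∀ η : Ahat, ξhat ≤ η) →
    (∀ η : Ahat, treeDepth η ≤ N - j₀) → (∃ η : Ahat, treeDepth η = N - j₀) →
    (∀ η : Ahat, treeDepth η < N - j₀ →
      (Nat.card {η' : Ahat // η ⋖ η'} : ℝ)
        = (2 : ℝ) ^ (psiStar ψ (j₀ + treeDepth η + 1) - psiStar ψ (j₀ + treeDepth η))) →
    SconstPQ p p (fun ξ : V => u (treeDepth ξ)) (fun ξ : V => w (treeDepth ξ)) ξs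
      ≤ c * SconstPQ p p (fun η : Ahat => u (j₀ + treeDepth η))
          (fun η : Ahat => w (j₀ + treeDepth η)) ξhat := by
  set q := p.conjExponent
  have hpq : p.HolderConjugate q := .conjExponent hp
  have hK : 0 < 2 * Cstar * p * q ^ (p - 1) := by
    have := hpq.symm.pos
    have : 0 < p := hpq.pos
    have : 0 < Cstar := by linarith
    positivity
  refine ⟨1, one_pos, fun _ _ => ⟨_, Real.rpow_pos_of_pos hK p⁻¹, ?_⟩⟩
  intro V _ _ hT N hdep _ ψ _ hψ hψ0 hcard _ u w hu hw _ σ _ _ _ _ ξs j₀ hξs Ahat _ _ hThat ξhat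
    hroot hdepHat _ hbranch
  subst hξs
  set S := SconstPQ p p (fun η : Ahat => u (treeDepth ξs + treeDepth η))
    (fun η : Ahat => w (treeDepth ξs + treeDepth η)) ξhat
  calc SconstPQ p p (fun ξ : V => u (treeDepth ξ)) (fun ξ : V => w (treeDepth ξ)) ξs
      ≤ (2 * Cstar * p * q ^ (p - 1) * S ^ p) ^ p⁻¹ :=
        hT.SconstPQ_le_of_levelMuckenhoupt_le hpq hu hw (fun _ => Real.rpow_pos_of_pos two_pos _)
          hdep (by linarith)
          (fun ξ' _ => card_le_two_mul_psiStar_ratio (by linarith) hψ hψ0 hcard ξ')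
          fun m hm => hThat.levelMuckenhoupt_psiStar_le_SconstPQ_rpow hpq hu (fun k => (hw k).le)
            hroot hdepHat hbranch hm
    _ = (2 * Cstar * p * q ^ (p - 1)) ^ p⁻¹ * S := by
        rw [Real.mul_rpow hK.le (Real.rpow_nonneg (SconstPQ_nonneg _ _ _ _ _) _),
          Real.rpow_rpow_inv (SconstPQ_nonneg _ _ _ _ _) hpq.pos.ne']
end
end
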